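/- Let δ₀ : ℂ → ℝP², δ₀(z) = [e^{√2 Re(z)} : e^{√2 Re(ω²z)} : e^{√2 Re(ωz)}] with ω = e^{2πi/3}, and let v ∈ ℂ with |v| = 1 and v³ ≠ −1. Then for every z ∈ ℂ the limit lim_{t→+∞} δ₀(z + vt) exists and equals [1:0:0] if arg(v) ∈ (−π/3, π/3), equals [0:1:0] if arg(v) ∈ (π/3, π), and equals [0:0:1] if arg(v) ∈ (π, 5π/3). Moreover, for v = e^{πi/3} and any s ∈ ℝ, lim_{t→+∞} δ₀(i s v + vt) = [1 : e^{√6 s} : 0]. -/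

import Mathlib

open Filter Real

/-- `ω = e^{2πi/3}`. -/
noncomputable def omega3 : ℂ := Complex.exp (2 * Real.pi * Complex.I / 3)

/-- The Ţiţeica affine spherical immersion (homogeneous coordinates of `δ₀`):
`ι₀(z) = (e^{√2 Re z}, e^{√2 Re(ω²z)}, e^{√2 Re(ωz)})`. -/
noncomputable def iota0 (z : ℂ) : Fin 3 → ℝ :=
  ![Real.exp (Real.sqrt 2 * z.re),
    Real.exp (Real.sqrt 2 * (omega3 ^ 2 * z).re),
    Real.exp (Real.sqrt 2 * (omega3 * z).re)]

open Topology

/-!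
The `k`-th homogeneous coordinate of `δ₀(z + vt)` is `exp (√2 Re(c_k z) + √2 Re(c_k v) t)` with
`c = (1, ω², ω)`, so every ratio of two coordinates is the exponential of an affine function of
`t`, and the coordinate with the largest `Re(c_k v)` dominates.  Writing `θ = arg v`, the
differences of the `Re(c_k v)` are `√3 |v| sin(θ + π/3)`, `√3 |v| sin(θ - π/3)` and
`√3 |v| sin θ`, whose signs cut the circle into the three sectors.  For `v = e^{iπ/3}` the first
two coordinates tie, and their ratio along the line `isv + vt` is the constant `e^{√6 s}`.
-/

lemma omega3_re : omega3.re = -(1 / 2) := by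
  rw [omega3, show 2 * (π : ℂ) * Complex.I / 3 = ((π - π / 3 : ℝ) : ℂ) * Complex.I by
    push_cast; ring, Complex.exp_ofReal_mul_I_re, cos_pi_sub, cos_pi_div_three]

lemma omega3_im : omega3.im = √3 / 2 := by
  rw [omega3, show 2 * (π : ℂ) * Complex.I / 3 = ((π - π / 3 : ℝ) : ℂ) * Complex.I by
    push_cast; ring, Complex.exp_ofReal_mul_I_im, sin_pi_sub, sin_pi_div_three]

lemma re_omega3_mul (v : ℂ) : (omega3 * v).re = -(v.re / 2) - √3 / 2 * v.im := by
  rw [Complex.mul_re, omega3_re, omega3_im]; ring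

lemma re_omega3_sq_mul (v : ℂ) : (omega3 ^ 2 * v).re = -(v.re / 2) + √3 / 2 * v.im := by
  have h3 : √3 * √3 = 3 := mul_self_sqrt (by norm_num)
  simp only [sq, Complex.mul_re, Complex.mul_im, omega3_re, omega3_im]
  linear_combination (-(v.re / 4)) * h3

noncomputable def iota0Weight : Fin 3 → ℂ := ![1, omega3 ^ 2, omega3]

lemma iota0_eq_exp (w : ℂ) (k : Fin 3) :
    iota0 w k = exp (√2 * (iota0Weight k * w).re) := by
  fin_cases k <;> simp [iota0, iota0Weight]

lemma iota0_add_mul_div (z v : ℂ) (t : ℝ) (i j : Fin 3) :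
    iota0 (z + v * t) i / iota0 (z + v * t) j =
      exp (√2 * ((iota0Weight i * z).re - (iota0Weight j * z).re) +
        √2 * ((iota0Weight i * v).re - (iota0Weight j * v).re) * t) := by
  rw [iota0_eq_exp, iota0_eq_exp, ← exp_sub]
  congr 1
  simp only [mul_add, ← mul_assoc, Complex.add_re, Complex.re_mul_ofReal]
  ring

lemma tendsto_exp_add_mul_atTop_zero (A : ℝ) {B : ℝ} (hB : B < 0) :
    Tendsto (fun t : ℝ => exp (A + B * t)) atTop (𝓝 0) :=
  tendsto_exp_atBot.comp
    (tendsto_atBot_add_const_left _ A (tendsto_id.const_mul_atTop_of_neg hB))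

lemma tendsto_iota0_div_iota0 {i j : Fin 3} (z : ℂ) {v : ℂ}
    (h : (iota0Weight i * v).re < (iota0Weight j * v).re) :
    Tendsto (fun t : ℝ => iota0 (z + v * t) i / iota0 (z + v * t) j) atTop (𝓝 0) := by
  simp only [iota0_add_mul_div]
  exact tendsto_exp_add_mul_atTop_zero _ (mul_neg_of_pos_of_neg (by positivity) (by linarith))

lemma re_sub_re_omega3_mul (v : ℂ) :
    v.re - (omega3 * v).re = √3 * ‖v‖ * sin (Complex.arg v + π / 3) := by
  have h3 : √3 * √3 = 3 := mul_self_sqrt (by norm_num)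
  rw [re_omega3_mul, sin_add, cos_pi_div_three, sin_pi_div_three,
    ← Complex.norm_mul_cos_arg v, ← Complex.norm_mul_sin_arg v]
  linear_combination (-(‖v‖ * cos (Complex.arg v) / 2)) * h3

lemma re_omega3_sq_mul_sub_re (v : ℂ) :
    (omega3 ^ 2 * v).re - v.re = √3 * ‖v‖ * sin (Complex.arg v - π / 3) := by
  have h3 : √3 * √3 = 3 := mul_self_sqrt (by norm_num)
  rw [re_omega3_sq_mul, sin_sub, cos_pi_div_three, sin_pi_div_three,
    ← Complex.norm_mul_cos_arg v, ← Complex.norm_mul_sin_arg v]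
  linear_combination (‖v‖ * cos (Complex.arg v) / 2) * h3

lemma re_omega3_sq_mul_sub_re_omega3_mul (v : ℂ) :
    (omega3 ^ 2 * v).re - (omega3 * v).re = √3 * ‖v‖ * sin (Complex.arg v) := by
  rw [re_omega3_sq_mul, re_omega3_mul, ← Complex.norm_mul_sin_arg v]
  ring

lemma iota0_zero_dominant_of_arg_mem {v : ℂ} (hv : v ≠ 0)
    (h : Complex.arg v ∈ Set.Ioo (-(π / 3)) (π / 3)) :
    (iota0Weight 1 * v).re < (iota0Weight 0 * v).re ∧
      (iota0Weight 2 * v).re < (iota0Weight 0 * v).re := by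
  obtain ⟨h1, h2⟩ := h
  have hc : 0 < √3 * ‖v‖ := by positivity
  have hs₁ : √3 * ‖v‖ * sin (Complex.arg v - π / 3) < 0 :=
    mul_neg_of_pos_of_neg hc (sin_neg_of_neg_of_neg_pi_lt (by linarith) (by linarith))
  have hs₂ : 0 < √3 * ‖v‖ * sin (Complex.arg v + π / 3) :=
    mul_pos hc (sin_pos_of_pos_of_lt_pi (by linarith) (by linarith))
  show (omega3 ^ 2 * v).re < (1 * v).re ∧ (omega3 * v).re < (1 * v).re
  rw [one_mul]
  constructor
  · linarith [re_omega3_sq_mul_sub_re v]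
  · linarith [re_sub_re_omega3_mul v]

lemma iota0_one_dominant_of_arg_mem {v : ℂ} (h : Complex.arg v ∈ Set.Ioo (π / 3) π) :
    (iota0Weight 0 * v).re < (iota0Weight 1 * v).re ∧
      (iota0Weight 2 * v).re < (iota0Weight 1 * v).re := by
  obtain ⟨h1, h2⟩ := h
  have hv : v ≠ 0 := by rintro rfl; rw [Complex.arg_zero] at h1; linarith [pi_pos]
  have hc : 0 < √3 * ‖v‖ := by positivity
  have hs₁ : 0 < √3 * ‖v‖ * sin (Complex.arg v - π / 3) :=
    mul_pos hc (sin_pos_of_pos_of_lt_pi (by linarith) (by linarith))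
  have hs₂ : 0 < √3 * ‖v‖ * sin (Complex.arg v) :=
    mul_pos hc (sin_pos_of_pos_of_lt_pi (by linarith [pi_pos]) h2)
  show (1 * v).re < (omega3 ^ 2 * v).re ∧ (omega3 * v).re < (omega3 ^ 2 * v).re
  rw [one_mul]
  constructor
  · linarith [re_omega3_sq_mul_sub_re v]
  · linarith [re_omega3_sq_mul_sub_re_omega3_mul v]

lemma iota0_two_dominant_of_arg_mem {v : ℂ} (h : Complex.arg v ∈ Set.Ioo (-π) (-(π / 3))) :
    (iota0Weight 0 * v).re < (iota0Weight 2 * v).re ∧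
      (iota0Weight 1 * v).re < (iota0Weight 2 * v).re := by
  obtain ⟨h1, h2⟩ := h
  have hv : v ≠ 0 := by rintro rfl; rw [Complex.arg_zero] at h2; linarith [pi_pos]
  have hc : 0 < √3 * ‖v‖ := by positivity
  have hs₁ : √3 * ‖v‖ * sin (Complex.arg v + π / 3) < 0 :=
    mul_neg_of_pos_of_neg hc (sin_neg_of_neg_of_neg_pi_lt (by linarith) (by linarith))
  have hs₂ : √3 * ‖v‖ * sin (Complex.arg v) < 0 :=
    mul_neg_of_pos_of_neg hc (sin_neg_of_neg_of_neg_pi_lt (by linarith [pi_pos]) h1)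
  show (1 * v).re < (omega3 * v).re ∧ (omega3 ^ 2 * v).re < (omega3 * v).re
  rw [one_mul]
  constructor
  · linarith [re_sub_re_omega3_mul v]
  · linarith [re_omega3_sq_mul_sub_re_omega3_mul v]

lemma exp_pi_mul_I_div_three_re : (Complex.exp (π * Complex.I / 3)).re = 1 / 2 := by
  rw [show (π : ℂ) * Complex.I / 3 = ((π / 3 : ℝ) : ℂ) * Complex.I by push_cast; ring,
    Complex.exp_ofReal_mul_I_re, cos_pi_div_three]

lemma exp_pi_mul_I_div_three_im : (Complex.exp (π * Complex.I / 3)).im = √3 / 2 := by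
  rw [show (π : ℂ) * Complex.I / 3 = ((π / 3 : ℝ) : ℂ) * Complex.I by push_cast; ring,
    Complex.exp_ofReal_mul_I_im, sin_pi_div_three]

lemma re_iota0Weight_mul_of_eq_exp_pi_mul_I_div_three {v : ℂ}
    (hv : v = Complex.exp (π * Complex.I / 3)) :
    (iota0Weight 1 * v).re = (iota0Weight 0 * v).re ∧
      (iota0Weight 2 * v).re < (iota0Weight 0 * v).re := by
  have h3 : √3 * √3 = 3 := mul_self_sqrt (by norm_num)
  show (omega3 ^ 2 * v).re = (1 * v).re ∧ (omega3 * v).re < (1 * v).re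
  rw [one_mul, re_omega3_sq_mul, re_omega3_mul, hv, exp_pi_mul_I_div_three_re,
    exp_pi_mul_I_div_three_im]
  constructor
  · linear_combination h3 / 4
  · nlinarith

lemma iota0_div_iota0_of_eq_exp_pi_mul_I_div_three {v : ℂ}
    (hv : v = Complex.exp (π * Complex.I / 3)) (s t : ℝ) :
    iota0 (Complex.I * s * v + v * t) 1 / iota0 (Complex.I * s * v + v * t) 0 =
      exp (√6 * s) := by
  rw [iota0_add_mul_div, (re_iota0Weight_mul_of_eq_exp_pi_mul_I_div_three hv).1, sub_self,
    mul_zero, zero_mul, add_zero]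
  show exp (√2 * ((omega3 ^ 2 * _).re - ((1 : ℂ) * _).re)) = _
  rw [one_mul, re_omega3_sq_mul, show √6 = √2 * √3 by rw [← sqrt_mul (by norm_num)]; norm_num]
  congr 1
  simp only [hv, Complex.mul_re, Complex.mul_im, Complex.I_re, Complex.I_im, Complex.ofReal_re,
    Complex.ofReal_im, exp_pi_mul_I_div_three_re, exp_pi_mul_I_div_three_im]
  ring

/-- Convergence to a vertex `[1:0:0]`, `[0:1:0]`, `[0:0:1]` is expressed in the corresponding
affine chart of `ℝP²` by the vanishing of the ratios of the other two homogeneous coordinates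
to the dominant one.  `Complex.arg` takes values in `(−π, π]`, so the interval `(π, 5π/3)` of
the informal statement becomes `arg v ∈ (−π, −π/3)`. -/
theorem stmt11_general (v : ℂ) (hv : ‖v‖ = 1) :
    (∀ z : ℂ, Complex.arg v ∈ Set.Ioo (-(π / 3)) (π / 3) →
      Tendsto (fun t : ℝ =>
          (iota0 (z + v * t) 1 / iota0 (z + v * t) 0,
           iota0 (z + v * t) 2 / iota0 (z + v * t) 0))
        atTop (nhds (0, 0))) ∧
    (∀ z : ℂ, Complex.arg v ∈ Set.Ioo (π / 3) π →
      Tendsto (fun t : ℝ =>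
          (iota0 (z + v * t) 0 / iota0 (z + v * t) 1,
           iota0 (z + v * t) 2 / iota0 (z + v * t) 1))
        atTop (nhds (0, 0))) ∧
    (∀ z : ℂ, Complex.arg v ∈ Set.Ioo (-π) (-(π / 3)) →
      Tendsto (fun t : ℝ =>
          (iota0 (z + v * t) 0 / iota0 (z + v * t) 2,
           iota0 (z + v * t) 1 / iota0 (z + v * t) 2))
        atTop (nhds (0, 0))) ∧
    (v = Complex.exp (π * Complex.I / 3) → ∀ s : ℝ,
      Tendsto (fun t : ℝ =>
          (iota0 (Complex.I * s * v + v * t) 1 / iota0 (Complex.I * s * v + v * t) 0,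
           iota0 (Complex.I * s * v + v * t) 2 / iota0 (Complex.I * s * v + v * t) 0))
        atTop (nhds (Real.exp (Real.sqrt 6 * s), 0))) := by
  have hv₀ : v ≠ 0 := norm_ne_zero_iff.1 (by rw [hv]; exact one_ne_zero)
  refine ⟨fun z h => ?_, fun z h => ?_, fun z h => ?_, fun hζ s => ?_⟩
  · obtain ⟨h₁, h₂⟩ := iota0_zero_dominant_of_arg_mem hv₀ h
    exact (tendsto_iota0_div_iota0 z h₁).prodMk_nhds (tendsto_iota0_div_iota0 z h₂)
  · obtain ⟨h₀, h₂⟩ := iota0_one_dominant_of_arg_mem h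
    exact (tendsto_iota0_div_iota0 z h₀).prodMk_nhds (tendsto_iota0_div_iota0 z h₂)
  · obtain ⟨h₀, h₁⟩ := iota0_two_dominant_of_arg_mem h
    exact (tendsto_iota0_div_iota0 z h₀).prodMk_nhds (tendsto_iota0_div_iota0 z h₁)
  · refine Tendsto.prodMk_nhds ?_
      (tendsto_iota0_div_iota0 _ (re_iota0Weight_mul_of_eq_exp_pi_mul_I_div_three hζ).2)
    simp only [iota0_div_iota0_of_eq_exp_pi_mul_I_div_three hζ]
    exact tendsto_const_nhds

/-- limits of `δ₀(z + vt)` as `t → +∞` for `|v| = 1`, `v³ ≠ −1`.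
Convergence to a vertex `[1:0:0]`, `[0:1:0]`, `[0:0:1]` of the triangle is
expressed in the corresponding affine chart of `ℝP²` by the vanishing of the
ratios of the other two homogeneous coordinates to the dominant one.  (In
Mathlib `Complex.arg` takes values in `(−π, π]`; the interval `(π, 5π/3)` of
the statement corresponds to `arg v ∈ (−π, −π/3)`.)  Moreover for
`v = e^{πi/3}` and `s ∈ ℝ`, `δ₀(isv + vt) → [1 : e^{√6 s} : 0]`. -/
theorem stmt11 (v : ℂ) (hv : ‖v‖ = 1) (hv3 : v ^ 3 ≠ -1) :
    (∀ z : ℂ, Complex.arg v ∈ Set.Ioo (-(π / 3)) (π / 3) →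
      Tendsto (fun t : ℝ =>
          (iota0 (z + v * t) 1 / iota0 (z + v * t) 0,
           iota0 (z + v * t) 2 / iota0 (z + v * t) 0))
        atTop (nhds (0, 0))) ∧
    (∀ z : ℂ, Complex.arg v ∈ Set.Ioo (π / 3) π →
      Tendsto (fun t : ℝ =>
          (iota0 (z + v * t) 0 / iota0 (z + v * t) 1,
           iota0 (z + v * t) 2 / iota0 (z + v * t) 1))
        atTop (nhds (0, 0))) ∧
    (∀ z : ℂ, Complex.arg v ∈ Set.Ioo (-π) (-(π / 3)) →
      Tendsto (fun t : ℝ =>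
          (iota0 (z + v * t) 0 / iota0 (z + v * t) 2,
           iota0 (z + v * t) 1 / iota0 (z + v * t) 2))
        atTop (nhds (0, 0))) ∧
    (v = Complex.exp (π * Complex.I / 3) → ∀ s : ℝ,
      Tendsto (fun t : ℝ =>
          (iota0 (Complex.I * s * v + v * t) 1 / iota0 (Complex.I * s * v + v * t) 0,
           iota0 (Complex.I * s * v + v * t) 2 / iota0 (Complex.I * s * v + v * t) 0))
        atTop (nhds (Real.exp (Real.sqrt 6 * s), 0))) :=
  stmt11_general v hv
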